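/- arXiv:0711.3665 — 3 statements merged into one kernel-verified Lean document; each statement's English description precedes it below -/
import Mathlib

section
/- For polynomials f, g, h in one complex variable and any κ ∈ ℂ, the product f *_κ g := Σ_{ℓ≥0} (1/ℓ!)(κ/2)^ℓ (∂_ζ^ℓ f)(∂_ζ^ℓ g) is associative: (f *_κ g) *_κ h = f *_κ (g *_κ h). -/
open Polynomial Finset

/-- Iterated derivative on polynomials. -/
noncomputable def pderiv : ℕ → Polynomial ℂ → Polynomial ℂ :=
  fun ℓ => (fun p => Polynomial.derivative p)^[ℓ]

/-- The commutative deformed product `f *_κ g = Σ_ℓ (1/ℓ!)(κ/2)^ℓ (∂^ℓ f)(∂^ℓ g)`;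
the sum is finite on polynomials, all terms with `ℓ > natDegree f + natDegree g` vanish. -/
noncomputable def starK (κ : ℂ) (f g : Polynomial ℂ) : Polynomial ℂ :=
  ∑ ℓ ∈ Finset.range (f.natDegree + g.natDegree + 1),
    Polynomial.C ((κ / 2) ^ ℓ / (Nat.factorial ℓ : ℂ)) * pderiv ℓ f * pderiv ℓ g

/-!
With `t = κ / 2`, the Leibniz rule turns `t ^ n / n! * ∂ⁿ (p * q)` into
`∑_{i + j = n} (t ^ i / i! * ∂ⁱ p) * (t ^ j / j! * ∂ʲ q)`. Expanding `(f *_κ g) *_κ h` this way gives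
`∑_{a,b,c} t ^ (a + b + c) / (a! b! c!) * ∂^(a+b) f * ∂^(a+c) g * ∂^(b+c) h`, which is invariant
under cyclically permuting `(f, g, h)` together with `(a, b, c)`. Since `*_κ` is commutative,
`f *_κ (g *_κ h) = (g *_κ h) *_κ f` expands to the same sum.
-/

open scoped Nat

theorem sum_range_sum_antidiagonal_eq_sum_range_sum_range {M : Type*} [AddCommMonoid M]
    {N : ℕ} {F : ℕ → ℕ → M} (hF : ∀ i j, N ≤ i + j → F i j = 0) :
    ∑ m ∈ range N, ∑ x ∈ antidiagonal m, F x.1 x.2 = ∑ i ∈ range N, ∑ j ∈ range N, F i j := by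
  rw [← sum_product', ← sum_filter_of_ne (p := fun x : ℕ × ℕ => x.1 + x.2 < N)
      (fun x _ hx => not_le.1 fun h => hx (hF x.1 x.2 h)),
    ← sum_fiberwise_of_maps_to (g := fun x : ℕ × ℕ => x.1 + x.2) (t := range N) (by simp)]
  refine sum_congr rfl fun m hm => sum_congr ?_ fun _ _ => rfl
  ext ⟨i, j⟩
  simp only [mem_range] at hm
  simp only [HasAntidiagonal.mem_antidiagonal, mem_filter, mem_product, mem_range]
  omega

theorem C_pow_div_factorial_mul_iterate_derivative_mul {R : Type*} [Field R] [CharZero R]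
    (t : R) (n : ℕ) (p q : R[X]) :
    C (t ^ n / n !) * derivative^[n] (p * q) = ∑ x ∈ antidiagonal n,
      C (t ^ x.1 / x.1 !) * derivative^[x.1] p * (C (t ^ x.2 / x.2 !) * derivative^[x.2] q) := by
  rw [iterate_derivative_mul, mul_sum, ← Nat.sum_antidiagonal_eq_sum_range_succ
    (fun i j => C (t ^ n / n !) * (n.choose i • (derivative^[j] p * derivative^[i] q))),
    ← Nat.sum_antidiagonal_swap]
  refine sum_congr rfl fun x hx => ?_
  rw [HasAntidiagonal.mem_antidiagonal] at hx
  subst hx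
  have hcoeff : t ^ (x.1 + x.2) / (x.1 + x.2)! * ((x.1 + x.2).choose x.2 : R)
      = t ^ x.1 / x.1 ! * (t ^ x.2 / x.2 !) := by
    have : ((x.1 + x.2)! : R) ≠ 0 := Nat.cast_ne_zero.2 (Nat.factorial_ne_zero _)
    rw [← Nat.choose_symm_add, Nat.cast_add_choose, pow_add]
    field_simp
  simp only [Prod.fst_swap, Prod.snd_swap, nsmul_eq_mul, ← C_eq_natCast]
  rw [← mul_assoc, ← C_mul, hcoeff, C_mul]
  ring

theorem pderiv_eq_iterate_derivative (ℓ : ℕ) (p : ℂ[X]) : pderiv ℓ p = derivative^[ℓ] p := rfl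

section starK

variable (κ : ℂ)

theorem starK_eq_sum_range (f g : ℂ[X]) {N : ℕ} (hN : g.natDegree < N) :
    starK κ f g = ∑ ℓ ∈ range N, C ((κ / 2) ^ ℓ / ℓ !) * pderiv ℓ f * pderiv ℓ g := by
  have hvanish : ∀ ℓ ≥ g.natDegree + 1,
      C ((κ / 2) ^ ℓ / ℓ !) * pderiv ℓ f * pderiv ℓ g = 0 := fun ℓ hℓ => by
    rw [pderiv_eq_iterate_derivative ℓ g, iterate_derivative_eq_zero (by omega), mul_zero]
  rw [starK, eventually_constant_sum hvanish (by omega), eventually_constant_sum hvanish hN]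

theorem starK_comm (f g : ℂ[X]) : starK κ f g = starK κ g f := by
  rw [starK, starK, add_comm g.natDegree]
  exact sum_congr rfl fun ℓ _ => by ring

theorem starK_sum_left {ι : Type*} (s : Finset ι) (p : ι → ℂ[X]) (h : ℂ[X]) :
    starK κ (∑ i ∈ s, p i) h = ∑ i ∈ s, starK κ (p i) h := by
  simp only [starK_eq_sum_range κ _ h (Nat.lt_succ_self _), pderiv_eq_iterate_derivative,
    iterate_derivative_sum, mul_sum, sum_mul]
  exact sum_comm

theorem starK_C_mul_left (a : ℂ) (p h : ℂ[X]) : starK κ (C a * p) h = C a * starK κ p h := by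
  simp only [starK_eq_sum_range κ _ h (Nat.lt_succ_self _), pderiv_eq_iterate_derivative,
    iterate_derivative_C_mul, mul_sum]
  exact sum_congr rfl fun ℓ _ => by ring

theorem starK_mul_left (p q h : ℂ[X]) {N : ℕ} (hN : h.natDegree < N) :
    starK κ (p * q) h = ∑ i ∈ range N, ∑ j ∈ range N,
      C ((κ / 2) ^ i / i !) * pderiv i p * (C ((κ / 2) ^ j / j !) * pderiv j q) *
        pderiv (i + j) h := by
  rw [starK_eq_sum_range κ _ h hN]
  refine Eq.trans ?_ (sum_range_sum_antidiagonal_eq_sum_range_sum_range ?_)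
  · refine sum_congr rfl fun m _ => ?_
    rw [pderiv_eq_iterate_derivative, C_pow_div_factorial_mul_iterate_derivative_mul, sum_mul]
    refine sum_congr rfl fun x hx => ?_
    rw [HasAntidiagonal.mem_antidiagonal.1 hx]
    rfl
  · intro i j hij
    rw [pderiv_eq_iterate_derivative (i + j) h, iterate_derivative_eq_zero (by omega), mul_zero]

theorem starK_starK_eq_sum (f g h : ℂ[X]) {N : ℕ} (hg : g.natDegree < N)
    (hh : h.natDegree < N) :
    starK κ (starK κ f g) h = ∑ a ∈ range N, ∑ b ∈ range N, ∑ c ∈ range N,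
      C ((κ / 2) ^ a / a !) * C ((κ / 2) ^ b / b !) * C ((κ / 2) ^ c / c !) *
        (pderiv (a + b) f * pderiv (a + c) g * pderiv (b + c) h) := by
  rw [starK_eq_sum_range κ f g hg, starK_sum_left]
  refine sum_congr rfl fun a _ => ?_
  rw [mul_assoc, starK_C_mul_left, starK_mul_left κ _ _ h hh, mul_sum]
  refine sum_congr rfl fun b _ => ?_
  rw [mul_sum]
  refine sum_congr rfl fun c _ => ?_
  simp only [pderiv_eq_iterate_derivative, ← Function.iterate_add_apply, add_comm b a,
    add_comm c a]
  ring

end starK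

theorem starK_assoc (κ : ℂ) (f g h : Polynomial ℂ) :
    starK κ (starK κ f g) h = starK κ f (starK κ g h) := by
  set N := f.natDegree + g.natDegree + h.natDegree + 1
  rw [starK_starK_eq_sum κ f g h (N := N) (by omega) (by omega), starK_comm κ f,
    starK_starK_eq_sum κ g h f (N := N) (by omega) (by omega)]
  conv_lhs => enter [2, a]; rw [sum_comm]
  rw [sum_comm]
  refine sum_congr rfl fun c _ => sum_congr rfl fun a _ => sum_congr rfl fun b _ => ?_
  rw [add_comm c a, add_comm c b]
  ring
end

section
/- The star exponentials of linear functions satisfy the exponential law: with exp_{*_κ}(tζ) := exp(tζ + (κ/4)t²), the *_κ-product gives exp_{*_κ}(sζ) *_κ exp_{*_κ}(tζ) = exp((s+t)ζ + (κ/4)(s+t)²). -/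
open Complex

lemma iteratedDeriv_exp_linear (s c : ℂ) (ℓ : ℕ) (ζ : ℂ) :
    iteratedDeriv ℓ (fun w : ℂ => Complex.exp (s * w + c)) ζ
      = s ^ ℓ * Complex.exp (s * ζ + c) := by
  induction ℓ generalizing ζ with
  | zero => simp
  | succ n ih =>
    rw [iteratedDeriv_succ]
    have hfn : iteratedDeriv n (fun w : ℂ => Complex.exp (s * w + c))
        = fun w : ℂ => s ^ n * Complex.exp (s * w + c) := funext ih
    rw [hfn]
    have h1 : HasDerivAt (fun w : ℂ => s ^ n * Complex.exp (s * w + c))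
        (s ^ (n + 1) * Complex.exp (s * ζ + c)) ζ := by
      have h0 : HasDerivAt (fun w : ℂ => s * w + c) s ζ := by
        simpa using ((hasDerivAt_id ζ).const_mul s).add_const c
      have := (h0.cexp).const_mul (s ^ n)
      rw [show s ^ (n + 1) * Complex.exp (s * ζ + c) = s ^ n * (Complex.exp (s * ζ + c) * s) by ring]
      exact this
    exact h1.deriv

/-- Exponential law for star exponentials of linear functions:
the series `Σ_ℓ (1/ℓ!)(κ/2)^ℓ ∂^ℓ(exp_{*κ} sζ) ∂^ℓ(exp_{*κ} tζ)` sums to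
`exp((s+t)ζ + (κ/4)(s+t)²)`, where `exp_{*κ}(tζ) = exp(tζ + (κ/4)t²)`. -/
theorem star_exp_linear_law (κ s t : ℂ) (ζ : ℂ) :
    HasSum
      (fun ℓ : ℕ =>
        (1 / (Nat.factorial ℓ : ℂ)) * (κ / 2) ^ ℓ *
          iteratedDeriv ℓ (fun w : ℂ => Complex.exp (s * w + κ / 4 * s ^ 2)) ζ *
          iteratedDeriv ℓ (fun w : ℂ => Complex.exp (t * w + κ / 4 * t ^ 2)) ζ)
      (Complex.exp ((s + t) * ζ + κ / 4 * (s + t) ^ 2)) := by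
  have key : ∀ ℓ : ℕ, (1 / (Nat.factorial ℓ : ℂ)) * (κ / 2) ^ ℓ *
          iteratedDeriv ℓ (fun w : ℂ => Complex.exp (s * w + κ / 4 * s ^ 2)) ζ *
          iteratedDeriv ℓ (fun w : ℂ => Complex.exp (t * w + κ / 4 * t ^ 2)) ζ
      = ((κ / 2 * s * t) ^ ℓ / (Nat.factorial ℓ : ℂ)) *
          (Complex.exp (s * ζ + κ / 4 * s ^ 2) * Complex.exp (t * ζ + κ / 4 * t ^ 2)) := by
    intro ℓ
    rw [iteratedDeriv_exp_linear, iteratedDeriv_exp_linear, mul_pow, mul_pow]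
    ring
  have h := NormedSpace.expSeries_div_hasSum_exp (κ / 2 * s * t)
  have h2 := h.mul_right (Complex.exp (s * ζ + κ / 4 * s ^ 2) * Complex.exp (t * ζ + κ / 4 * t ^ 2))
  have : NormedSpace.exp (κ / 2 * s * t) *
      (Complex.exp (s * ζ + κ / 4 * s ^ 2) * Complex.exp (t * ζ + κ / 4 * t ^ 2))
      = Complex.exp ((s + t) * ζ + κ / 4 * (s + t) ^ 2) := by
    rw [← Complex.exp_eq_exp_ℂ, ← Complex.exp_add, ← Complex.exp_add]
    ring_nf
  rw [this] at h2
  exact h2.congr_fun fun ℓ => (key ℓ).symm ▸ rfl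
end

section
/- The extended product (a, g) •_{ln} (b, g') = ((a+b)/(1+ab), g + g' + Log(1+ab)) on pairs in ℂ² is associative modulo 2πiℤ: the second components of ((a,g) •_{ln} (b,g')) •_{ln} (c,g'') and (a,g) •_{ln} ((b,g') •_{ln} (c,g'')) differ by an element of 2πiℤ, and their first components are equal, whenever all the relevant quantities 1+ab, 1+bc, 1+(a•₀b)c, 1+a(b•₀c) are nonzero. -/
open Complex Real

/-- The tanh addition law `a •₀ b = (a+b)/(1+ab)`. -/
noncomputable def bullet0 (a b : ℂ) : ℂ := (a + b) / (1 + a * b)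

/-- The extended product `(a,g) •_{ln} (b,g') = (a •₀ b, g + g' + Log(1+ab))`. -/
noncomputable def prodLn (p q : ℂ × ℂ) : ℂ × ℂ :=
  (bullet0 p.1 q.1, p.2 + q.2 + Complex.log (1 + p.1 * q.1))

/-! Both bracketings of `a •₀ b •₀ c` are the symmetric expression
`(a + b + c + abc) / (1 + ab + bc + ca)`, and `exp` turns the second component of
`•_{ln}` into the product `e^g e^g' (1 + ab)`, so both second components have the
same exponential `e^g e^g' e^g'' (1 + ab + bc + ca)`. -/

theorem bullet0_comm (a b : ℂ) : bullet0 a b = bullet0 b a := by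
  unfold bullet0
  ring

theorem bullet0_bullet0 {a b : ℂ} (c : ℂ) (hab : 1 + a * b ≠ 0) :
    bullet0 (bullet0 a b) c = (a + b + c + a * b * c) / (1 + a * b + b * c + c * a) := by
  unfold bullet0
  rw [div_add' _ _ _ hab, div_mul_eq_mul_div, one_add_div hab, div_div_div_cancel_right₀ hab]
  ring_nf

theorem bullet0_assoc {a b c : ℂ} (hab : 1 + a * b ≠ 0) (hbc : 1 + b * c ≠ 0) :
    bullet0 (bullet0 a b) c = bullet0 a (bullet0 b c) := by
  rw [bullet0_bullet0 c hab, bullet0_comm a, bullet0_comm b,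
    bullet0_bullet0 a (by rwa [mul_comm])]
  ring_nf

theorem one_add_mul_mul_one_add_bullet0_mul {a b : ℂ} (c : ℂ) (hab : 1 + a * b ≠ 0) :
    (1 + a * b) * (1 + bullet0 a b * c) = 1 + a * b + b * c + c * a := by
  unfold bullet0
  field_simp
  ring

theorem one_add_mul_mul_one_add_mul_bullet0 (a : ℂ) {b c : ℂ} (hbc : 1 + b * c ≠ 0) :
    (1 + b * c) * (1 + a * bullet0 b c) = 1 + a * b + b * c + c * a := by
  rw [mul_comm a, bullet0_comm b, mul_comm b,
    one_add_mul_mul_one_add_bullet0_mul a (by rwa [mul_comm])]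
  ring

theorem exp_prodLn_snd {p q : ℂ × ℂ} (h : 1 + p.1 * q.1 ≠ 0) :
    exp (prodLn p q).2 = exp p.2 * exp q.2 * (1 + p.1 * q.1) := by
  rw [prodLn, Complex.exp_add, Complex.exp_add, exp_log h]

/-- The extended product is associative modulo `2πiℤ` in the second component,
with equal first components, whenever the relevant denominators are nonzero. -/
theorem prodLn_assoc_mod (a b c g g' g'' : ℂ)
    (hab : 1 + a * b ≠ 0) (hbc : 1 + b * c ≠ 0)
    (h1 : 1 + bullet0 a b * c ≠ 0) (h2 : 1 + a * bullet0 b c ≠ 0) :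
    (prodLn (prodLn (a, g) (b, g')) (c, g'')).1
      = (prodLn (a, g) (prodLn (b, g') (c, g''))).1 ∧
    ∃ n : ℤ,
      (prodLn (prodLn (a, g) (b, g')) (c, g'')).2
        - (prodLn (a, g) (prodLn (b, g') (c, g''))).2 = 2 * π * I * n := by
  refine ⟨bullet0_assoc hab hbc, ?_⟩
  have hexp : exp (prodLn (prodLn (a, g) (b, g')) (c, g'')).2
      = exp (prodLn (a, g) (prodLn (b, g') (c, g''))).2 := by
    rw [exp_prodLn_snd h1, exp_prodLn_snd hab, exp_prodLn_snd h2, exp_prodLn_snd hbc]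
    dsimp only [prodLn]
    linear_combination exp g * exp g' * exp g'' *
      (one_add_mul_mul_one_add_bullet0_mul c hab - one_add_mul_mul_one_add_mul_bullet0 a hbc)
  obtain ⟨n, hn⟩ := exp_eq_exp_iff_exists_int.mp hexp
  exact ⟨n, by rw [hn]; ring⟩
end
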